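/- arXiv:2010.01946 — 4 statements merged into one kernel-verified Lean document; each statement's English description precedes it below -/
import Mathlib

section
/- Let d > 1 and 0 ≤ a < 1. Define u₊ = √(4a²d² + (1-a²)²) and w₊ = (-2a²d + u₊ + 2a√(d²(1+a²) - d·u₊))/(1 - a²). Then 4d - w₊ - 1/w₊ = 2(2d - u₊)/(1 - a²) > 0. -/
/-!
Writing `c = 1 - a²` and `b = u₊ - 2a²d`, the identity `u₊² = 4a²d² + c²` gives
`(c w₊ - b)² = 4a²(d²(1 + a²) - d u₊) = b² - c²`, i.e. `c w₊² - 2b w₊ + c = 0`.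
Hence `w₊ + 1/w₊ = 2b/c`, and `4d - 2b/c = 2(2d - u₊)/c`, which is positive because
`u₊² < 4d²`.
-/

open Real

noncomputable def uPlus (d a : ℝ) : ℝ := √(4 * a ^ 2 * d ^ 2 + (1 - a ^ 2) ^ 2)

noncomputable def wPlus (d a : ℝ) : ℝ :=
  (-2 * a ^ 2 * d + uPlus d a + 2 * a * √(d ^ 2 * (1 + a ^ 2) - d * uPlus d a)) / (1 - a ^ 2)

lemma add_inv_eq_div_of_sq_eq {K : Type*} [Field K] {b c w : K} (hc : c ≠ 0)
    (h : (c * w - b) ^ 2 = b ^ 2 - c ^ 2) : w + w⁻¹ = 2 * b / c := by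
  have hw : w ≠ 0 := by
    rintro rfl
    exact hc (pow_eq_zero_iff two_ne_zero |>.mp (by linear_combination h))
  have hq : c * (w ^ 2 + 1) = 2 * b * w :=
    mul_left_cancel₀ hc (by linear_combination h)
  rw [eq_div_iff hc]
  field_simp
  linear_combination hq

lemma sq_uPlus (d a : ℝ) : uPlus d a ^ 2 = 4 * a ^ 2 * d ^ 2 + (1 - a ^ 2) ^ 2 :=
  sq_sqrt (by positivity)

lemma uPlus_le {d : ℝ} (a : ℝ) (hd : 1 ≤ d) : uPlus d a ≤ d * (1 + a ^ 2) := by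
  refine sqrt_le_iff.mpr ⟨by positivity, ?_⟩
  nlinarith [mul_nonneg (by nlinarith : (0 : ℝ) ≤ d ^ 2 - 1) (sq_nonneg (1 - a ^ 2))]

lemma uPlus_lt_two_mul {d a : ℝ} (hd : 1 < 2 * d) (ha : a ^ 2 < 1) : uPlus d a < 2 * d := by
  refine (sqrt_lt' (by linarith)).mpr ?_
  nlinarith [mul_lt_mul_of_pos_right (by nlinarith : 1 - a ^ 2 < 4 * d ^ 2)
    (by linarith : 0 < 1 - a ^ 2)]

lemma wPlus_add_inv {d a : ℝ} (hd : 1 ≤ d) (ha : a ^ 2 < 1) :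
    wPlus d a + (wPlus d a)⁻¹ = 2 * (uPlus d a - 2 * a ^ 2 * d) / (1 - a ^ 2) := by
  have hc : 1 - a ^ 2 ≠ 0 := by linarith
  have ht : √(d ^ 2 * (1 + a ^ 2) - d * uPlus d a) ^ 2 = d ^ 2 * (1 + a ^ 2) - d * uPlus d a :=
    sq_sqrt (by nlinarith [uPlus_le a hd])
  refine add_inv_eq_div_of_sq_eq hc ?_
  rw [wPlus, mul_div_cancel₀ _ hc]
  linear_combination 4 * a ^ 2 * ht - sq_uPlus d a

theorem stmt5_general (d a u wp : ℝ) (hd : 1 < d) (ha : 0 ≤ a) (ha1 : a < 1)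
    (hu : u = Real.sqrt (4 * a ^ 2 * d ^ 2 + (1 - a ^ 2) ^ 2))
    (hwp : wp = (-2 * a ^ 2 * d + u + 2 * a * Real.sqrt (d ^ 2 * (1 + a ^ 2) - d * u)) / (1 - a ^ 2)) :
    4 * d - wp - wp⁻¹ = 2 * (2 * d - u) / (1 - a ^ 2) ∧
    0 < 2 * (2 * d - u) / (1 - a ^ 2) := by
  have ha2 : a ^ 2 < 1 := by nlinarith
  have hc : 0 < 1 - a ^ 2 := by linarith
  have hu' : u = uPlus d a := hu
  have hwp' : wp = wPlus d a := by rw [hwp, hu']; rfl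
  subst hu' hwp'
  refine ⟨?_, div_pos (by linarith [uPlus_lt_two_mul (d := d) (by linarith) ha2]) hc⟩
  rw [sub_sub, wPlus_add_inv hd.le ha2]
  field_simp
  ring

theorem stmt5 (d a u wp : ℝ) (hd : 1 < d) (ha : 0 ≤ a) (ha1 : a < 1)
    (hu : u = Real.sqrt (4 * a ^ 2 * d ^ 2 + (1 - a ^ 2) ^ 2))
    (hwp : wp = (-2 * a ^ 2 * d + u + 2 * a * Real.sqrt (d ^ 2 * (1 + a ^ 2) - d * u)) / (1 - a ^ 2))
    (hwpos : 0 < wp) :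
    4 * d - wp - wp⁻¹ = 2 * (2 * d - u) / (1 - a ^ 2) ∧
    0 < 2 * (2 * d - u) / (1 - a ^ 2) :=
  stmt5_general d a u wp hd ha ha1 hu hwp
end

section
/- Let d > 1 and 0 ≤ a < 1, with u₊ = √(4a²d² + (1-a²)²) and w₊ = (-2a²d + u₊ + 2a√(d²(1+a²) - d·u₊))/(1 - a²). Then w₊ satisfies a·√((4d - w₊ - 1/w₊)² - 4) = w₊ - 1/w₊; i.e. w₊ is a critical point of S(w) = -log z₊(w) - a log w where z₊(w) = ((4d - w - 1/w) + √((4d - w - 1/w)² - 4))/2. -/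
theorem stmt6 (d a u wp : ℝ) (hd : 1 < d) (ha : 0 ≤ a) (ha1 : a < 1)
    (hu : u = Real.sqrt (4 * a ^ 2 * d ^ 2 + (1 - a ^ 2) ^ 2))
    (hwp : wp = (-2 * a ^ 2 * d + u + 2 * a * Real.sqrt (d ^ 2 * (1 + a ^ 2) - d * u)) / (1 - a ^ 2)) :
    a * Real.sqrt ((4 * d - wp - wp⁻¹) ^ 2 - 4) = wp - wp⁻¹ := by
  set s := Real.sqrt (d ^ 2 * (1 + a ^ 2) - d * u) with hs
  have hd0 : (0:ℝ) < d := by linarith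
  have h1a : (0:ℝ) < 1 - a ^ 2 := by nlinarith
  have hu0 : 0 ≤ u := hu ▸ Real.sqrt_nonneg _
  have hu2 : u ^ 2 = 4 * a ^ 2 * d ^ 2 + (1 - a ^ 2) ^ 2 := by
    rw [hu, Real.sq_sqrt]; nlinarith
  have hule : u ≤ d * (1 + a ^ 2) := by
    have hd2 : (1:ℝ) ≤ d ^ 2 := by nlinarith
    have h1 : 4 * a ^ 2 * d ^ 2 + (1 - a ^ 2) ^ 2 ≤ (d * (1 + a ^ 2)) ^ 2 := by
      nlinarith [mul_nonneg (sub_nonneg.2 hd2) (sq_nonneg (1 - a ^ 2))]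
    calc u = Real.sqrt (4 * a ^ 2 * d ^ 2 + (1 - a ^ 2) ^ 2) := hu
    _ ≤ Real.sqrt ((d * (1 + a ^ 2)) ^ 2) := Real.sqrt_le_sqrt h1
    _ = d * (1 + a ^ 2) := Real.sqrt_sq (by positivity)
  have hs0 : 0 ≤ s := Real.sqrt_nonneg _
  have hs2 : s ^ 2 = d ^ 2 * (1 + a ^ 2) - d * u := by
    rw [hs, Real.sq_sqrt]; nlinarith
  have hugt : 2 * a ^ 2 * d < u := by nlinarith
  have hwp_pos : 0 < wp := by
    rw [hwp]
    apply div_pos _ h1a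
    nlinarith [mul_nonneg ha hs0]
  have hwp_ne : wp ≠ 0 := ne_of_gt hwp_pos
  have hquad : wp * ((-2 * a ^ 2 * d + u - 2 * a * s) / (1 - a ^ 2)) = 1 := by
    rw [hwp]
    field_simp
    nlinarith [hu2, hs2]
  have hinv : wp⁻¹ = (-2 * a ^ 2 * d + u - 2 * a * s) / (1 - a ^ 2) :=
    inv_eq_of_mul_eq_one_right hquad
  have hX : wp - wp⁻¹ = 4 * a * s / (1 - a ^ 2) := by
    rw [hinv, hwp]; field_simp; ring
  have hY : 4 * d - wp - wp⁻¹ = (4 * d - 2 * u) / (1 - a ^ 2) := by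
    rw [hinv, hwp]; field_simp; ring
  have hX0 : 0 ≤ wp - wp⁻¹ := by
    rw [hX]
    apply div_nonneg _ (le_of_lt h1a)
    positivity
  have hkey : a ^ 2 * ((4 * d - wp - wp⁻¹) ^ 2 - 4) = (wp - wp⁻¹) ^ 2 := by
    rw [hX, hY]
    field_simp
    nlinarith [hu2, hs2]
  calc a * Real.sqrt ((4 * d - wp - wp⁻¹) ^ 2 - 4)
      = Real.sqrt (a ^ 2 * ((4 * d - wp - wp⁻¹) ^ 2 - 4)) := by
        rw [Real.sqrt_mul (sq_nonneg a), Real.sqrt_sq ha]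
    _ = Real.sqrt ((wp - wp⁻¹) ^ 2) := by rw [hkey]
    _ = wp - wp⁻¹ := Real.sqrt_sq hX0
end

section
/- Let d > 1 and suppose 1 ≤ w ≤ d + √(d² - 1). Define z₊(w) = ((4d - w - 1/w) + √((4d - w - 1/w)² - 4))/2. Then d + √(d² - 1) ≤ z₊(w) ≤ 2d - 1 + 2√(d(d - 1)). -/
theorem stmt9 (d w : ℝ) (hd : 1 < d) (hw1 : 1 ≤ w) (hw2 : w ≤ d + Real.sqrt (d ^ 2 - 1)) :
    d + Real.sqrt (d ^ 2 - 1) ≤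
      ((4 * d - w - w⁻¹) + Real.sqrt ((4 * d - w - w⁻¹) ^ 2 - 4)) / 2 ∧
    ((4 * d - w - w⁻¹) + Real.sqrt ((4 * d - w - w⁻¹) ^ 2 - 4)) / 2 ≤
      2 * d - 1 + 2 * Real.sqrt (d * (d - 1)) := by
  have hw0 : (0:ℝ) < w := lt_of_lt_of_le one_pos hw1
  have hinv : w * w⁻¹ = 1 := mul_inv_cancel₀ hw0.ne'
  have hs1 : 0 ≤ Real.sqrt (d ^ 2 - 1) := Real.sqrt_nonneg _
  have hsq : Real.sqrt (d ^ 2 - 1) ^ 2 = d ^ 2 - 1 := Real.sq_sqrt (by nlinarith)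
  have hlow : d - Real.sqrt (d ^ 2 - 1) ≤ w := by nlinarith
  have key : w ^ 2 - 2 * d * w + 1 ≤ 0 := by
    nlinarith [mul_nonneg (sub_nonneg.2 hlow) (sub_nonneg.2 hw2)]
  have h1 : w + w⁻¹ ≤ 2 * d := by
    have hi0 : 0 < w⁻¹ := inv_pos.2 hw0
    nlinarith [key, hinv, mul_pos hw0 hi0]
  have h2 : 2 ≤ w + w⁻¹ := by
    have hi0 : 0 < w⁻¹ := inv_pos.2 hw0
    nlinarith [sq_nonneg (w - 1), hinv]
  set s := 4 * d - w - w⁻¹ with hs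
  have hs_lb : 2 * d ≤ s := by rw [hs]; linarith
  have hs_ub : s ≤ 4 * d - 2 := by rw [hs]; linarith
  have hspos : 0 < s := by linarith
  constructor
  · have hA : Real.sqrt (4 * d ^ 2 - 4) ≤ Real.sqrt (s ^ 2 - 4) :=
      Real.sqrt_le_sqrt (by nlinarith)
    have hB : Real.sqrt (4 * d ^ 2 - 4) = 2 * Real.sqrt (d ^ 2 - 1) := by
      rw [show (4 * d ^ 2 - 4 : ℝ) = (2 * Real.sqrt (d ^ 2 - 1)) ^ 2 by nlinarith]
      exact Real.sqrt_sq (by positivity)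
    rw [hB] at hA
    linarith
  · have hC : Real.sqrt (s ^ 2 - 4) ≤ Real.sqrt (16 * (d * (d - 1))) :=
      Real.sqrt_le_sqrt (by nlinarith)
    have hD : Real.sqrt (16 * (d * (d - 1))) = 4 * Real.sqrt (d * (d - 1)) := by
      have hdd : 0 ≤ d * (d - 1) := by nlinarith
      rw [show (16 * (d * (d - 1)) : ℝ) = (4 * Real.sqrt (d * (d - 1))) ^ 2 by
        rw [mul_pow, Real.sq_sqrt hdd]; ring]
      exact Real.sqrt_sq (by positivity)
    rw [hD] at hC
    linarith
end

section
/- Let d > 1 and let S(w) = -log z₊(w) - a·log w with z₊(w) = ((4d - w - 1/w) + √((4d - w - 1/w)² - 4))/2 and 0 ≤ a ≤ 1. As a ranges over [0,1], consider the parametric curve γ(a) = (-1/S(w₊(a)), -a/S(w₊(a))), where w₊(a) is the larger critical point of S. Its dual curve (with the standard duality (x,y) ↦ (y'/Q, -x'/Q), Q = y x' - x y') is the curve a ↦ (-log z₊(w₊(a)), -log w₊(a)); in particular, writing S = S(w₊(a)) and S_a = dS/da, one has S_a = -log(w₊(a)) and Q(a) = -1/S². -/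
/-!
Envelope theorem: since `w₊(a)` is a critical point of `w ↦ S(w)`, differentiating
`S(a) = -log z₊(w₊(a)) - a log w₊(a)` in `a` leaves only the explicit dependence on `a`,
so `S'(a) = -log w₊(a)`. For the curve `(x, y) = (-1/S, -a/S)` this gives
`x' = S'/S²`, `y' = (a S' - S)/S²`, hence `Q = y x' - x y' = -1/S²` and the dual curve is
`(S - a S', S') = (-log z₊(w₊), -log w₊)`.
-/

open Real Filter Topology

theorem add_inv_injOn_Ici_one : Set.InjOn (fun x : ℝ => x + x⁻¹) (Set.Ici 1) := by
  intro x (hx : 1 ≤ x) y (hy : 1 ≤ y) h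
  have hfactor : (x - y) * (x * y - 1) = 0 := by
    field_simp at h
    linear_combination h
  rcases mul_eq_zero.mp hfactor with h | h
  · linarith
  · nlinarith

theorem eq_zero_of_add_sqrt_sq_sub_four_eq_zero {u : ℝ} (h : u + √(u ^ 2 - 4) = 0) :
    u = 0 := by
  have hsqrt : √(u ^ 2 - 4) = -u := by linarith
  have hneg : u ^ 2 - 4 < 0 := by
    by_contra! hnonneg
    have := Real.sq_sqrt hnonneg
    rw [hsqrt] at this
    nlinarith
  linarith [Real.sqrt_eq_zero_of_nonpos hneg.le]

/-- For `|u| < 2` Mathlib's `√` returns `0`, so the formula for `z₊` gives `u / 2`, whose logarithm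
is too negative for `-log z₊(w) - t log w < 0` once `|u| w < 2`, unless `u = 0` (and `log 0 = 0`). -/
theorem eq_zero_of_abs_mul_lt_two {u w t : ℝ} (hw : 1 ≤ w) (ht : t ≤ 1)
    (hsmall : |u| * w < 2) (hneg : -log ((u + √(u ^ 2 - 4)) / 2) - t * log w < 0) :
    u = 0 := by
  by_contra hu
  have hu2 : |u| < 2 := by nlinarith [abs_nonneg u]
  have hsqrt : √(u ^ 2 - 4) = 0 :=
    Real.sqrt_eq_zero_of_nonpos (by nlinarith [sq_abs u, abs_nonneg u])
  have hlog : log ((u + √(u ^ 2 - 4)) / 2) = log (|u| / 2) := by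
    rw [hsqrt, add_zero, ← Real.log_abs, abs_div, abs_two]
  have hprod : log (|u| / 2) + log w < 0 := by
    rw [← Real.log_mul (by positivity) (by positivity)]
    exact Real.log_neg (by positivity) (by linarith)
  have hlogw : t * log w ≤ log w := by
    nlinarith [Real.log_nonneg hw]
  linarith

theorem hasDerivAt_comp_sub_mul_log_of_deriv_eq_zero {φ w : ℝ → ℝ} {a φ' : ℝ}
    (hφ : HasDerivAt φ φ' (w a)) (hw : DifferentiableAt ℝ w a) (hwa : w a ≠ 0)
    (hcrit : deriv (fun x => φ x - a * log x) (w a) = 0) :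
    HasDerivAt (fun t => φ (w t) - t * log (w t)) (-log (w a)) a := by
  have hφ' : φ' = a * (w a)⁻¹ := by
    have h : HasDerivAt (fun x => φ x - a * log x) (φ' - a * (w a)⁻¹) (w a) :=
      hφ.sub ((Real.hasDerivAt_log hwa).const_mul a)
    rw [h.deriv] at hcrit
    linarith
  have h : HasDerivAt (fun t => φ (w t) - t * log (w t))
      (φ' * deriv w a - (1 * log (w a) + a * (deriv w a / w a))) a :=
    (hφ.comp a hw.hasDerivAt).sub ((hasDerivAt_id a).mul (hw.hasDerivAt.log hwa))
  convert h using 1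
  rw [hφ']
  field_simp
  ring

theorem eventually_eq_of_zp_eq_zero {d : ℝ} {zp wp S : ℝ → ℝ} {a : ℝ}
    (hzp : ∀ w : ℝ, zp w = ((4 * d - w - w⁻¹) + √((4 * d - w - w⁻¹) ^ 2 - 4)) / 2)
    (hwp : ContinuousAt wp a) (hwp1 : ∀ t ∈ Set.Icc (0 : ℝ) 1, 1 ≤ wp t)
    (hS : ∀ t : ℝ, S t = -log (zp (wp t)) - t * log (wp t))
    (hSneg : ∀ t ∈ Set.Icc (0 : ℝ) 1, S t < 0)
    (ha : a ∈ Set.Ioo (0 : ℝ) 1) (hz : zp (wp a) = 0) :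
    ∀ᶠ t in 𝓝 a, wp t = wp a := by
  set u : ℝ → ℝ := fun t => 4 * d - wp t - (wp t)⁻¹ with hu
  have hwa : 1 ≤ wp a := hwp1 a (Set.Ioo_subset_Icc_self ha)
  have hua : u a = 0 :=
    eq_zero_of_add_sqrt_sq_sub_four_eq_zero (by rw [hzp] at hz; linarith)
  have hcont : ContinuousAt (fun t => |u t| * wp t) a :=
    ((continuousAt_const.sub hwp).sub (hwp.inv₀ (by linarith))).abs.mul hwp
  have hsmall : ∀ᶠ t in 𝓝 a, |u t| * wp t < 2 :=
    hcont.eventually_lt continuousAt_const (by simp [hua])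
  filter_upwards [hsmall, Ioo_mem_nhds ha.1 ha.2] with t hsmall_t hta
  have htI := Set.Ioo_subset_Icc_self hta
  have hut : u t = 0 := by
    refine eq_zero_of_abs_mul_lt_two (hwp1 t htI) htI.2 hsmall_t ?_
    simpa only [hu, hS, hzp] using hSneg t htI
  exact add_inv_injOn_Ici_one (hwp1 t htI) hwa (by simp only [hu] at hut hua; linarith)

theorem neg_inv_curve_dual {S : ℝ → ℝ} {a S' : ℝ} (hS : HasDerivAt S S' a) (h0 : S a ≠ 0) :
    (-a / S a) * deriv (fun t => -1 / S t) a - (-1 / S a) * deriv (fun t => -t / S t) a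
      = -1 / S a ^ 2 ∧
    deriv (fun t => -t / S t) a / (-1 / S a ^ 2) = S a - a * S' ∧
    -(deriv (fun t => -1 / S t) a) / (-1 / S a ^ 2) = S' := by
  have hx : HasDerivAt (fun t => -1 / S t) ((0 * S a - -1 * S') / S a ^ 2) a :=
    (hasDerivAt_const a (-1 : ℝ)).div hS h0
  have hy : HasDerivAt (fun t => -t / S t) ((-1 * S a - -a * S') / S a ^ 2) a :=
    (hasDerivAt_id a).neg.div hS h0
  rw [hx.deriv, hy.deriv]
  refine ⟨?_, ?_, ?_⟩ <;> field_simp <;> ring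

theorem stmt18_general (d : ℝ)
    (zp wp : ℝ → ℝ)
    (hzp : ∀ w : ℝ, zp w = ((4 * d - w - w⁻¹) + Real.sqrt ((4 * d - w - w⁻¹) ^ 2 - 4)) / 2)
    (hwpdiff : Differentiable ℝ wp)
    (hzpdiff : ∀ a : ℝ, DifferentiableAt ℝ zp (wp a))
    (hwp1 : ∀ a ∈ Set.Icc (0 : ℝ) 1, 1 ≤ wp a)
    (hcrit : ∀ a ∈ Set.Icc (0 : ℝ) 1,
      deriv (fun w => -Real.log (zp w) - a * Real.log w) (wp a) = 0)
    (S : ℝ → ℝ)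
    (hS : ∀ a : ℝ, S a = -Real.log (zp (wp a)) - a * Real.log (wp a))
    (hSneg : ∀ a ∈ Set.Icc (0 : ℝ) 1, S a < 0)
    (a : ℝ) (ha : a ∈ Set.Ioo (0 : ℝ) 1) :
    deriv S a = -Real.log (wp a) ∧
    (-a / S a) * deriv (fun t => -1 / S t) a - (-1 / S a) * deriv (fun t => -t / S t) a
      = -1 / (S a) ^ 2 ∧
    deriv (fun t => -t / S t) a / (-1 / (S a) ^ 2) = -Real.log (zp (wp a)) ∧
    -(deriv (fun t => -1 / S t) a) / (-1 / (S a) ^ 2) = -Real.log (wp a) := by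
  have haI : a ∈ Set.Icc (0 : ℝ) 1 := Set.Ioo_subset_Icc_self ha
  have hwa : wp a ≠ 0 := by linarith [hwp1 a haI]
  have hSa : HasDerivAt S (-log (wp a)) a := by
    by_cases hz : zp (wp a) = 0
    · -- `log ∘ zp` is not differentiable at `wp a`, so `hcrit` holds only by `deriv`'s junk value;
      -- instead `wp` is locally constant, making `S` affine near `a`.
      have hloc := eventually_eq_of_zp_eq_zero hzp (hwpdiff a).continuousAt hwp1 hS hSneg ha hz
      have hlin : HasDerivAt (fun t => -log (zp (wp a)) - t * log (wp a)) (-log (wp a)) a := by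
        simpa using ((hasDerivAt_id a).mul_const (log (wp a))).const_sub (-log (zp (wp a)))
      exact hlin.congr_of_eventuallyEq (hloc.mono fun t ht => by rw [hS, ht])
    · rw [show S = _ from funext hS]
      exact hasDerivAt_comp_sub_mul_log_of_deriv_eq_zero ((hzpdiff a).hasDerivAt.log hz).neg
        (hwpdiff a) hwa (hcrit a haI)
  obtain ⟨hQ, hx, hy⟩ := neg_inv_curve_dual hSa (hSneg a haI).ne
  refine ⟨hSa.deriv, hQ, ?_, hy⟩
  rw [hx, hS a]
  ring

theorem stmt18 (d : ℝ) (hd : 1 < d)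
    (zp wp : ℝ → ℝ)
    (hzp : ∀ w : ℝ, zp w = ((4 * d - w - w⁻¹) + Real.sqrt ((4 * d - w - w⁻¹) ^ 2 - 4)) / 2)
    (hwpdiff : Differentiable ℝ wp)
    (hzpdiff : ∀ a : ℝ, DifferentiableAt ℝ zp (wp a))
    (hwp1 : ∀ a ∈ Set.Icc (0 : ℝ) 1, 1 ≤ wp a)
    (hcrit : ∀ a ∈ Set.Icc (0 : ℝ) 1,
      deriv (fun w => -Real.log (zp w) - a * Real.log w) (wp a) = 0)
    (S : ℝ → ℝ)
    (hS : ∀ a : ℝ, S a = -Real.log (zp (wp a)) - a * Real.log (wp a))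
    (hSneg : ∀ a ∈ Set.Icc (0 : ℝ) 1, S a < 0)
    (a : ℝ) (ha : a ∈ Set.Ioo (0 : ℝ) 1) :
    deriv S a = -Real.log (wp a) ∧
    (-a / S a) * deriv (fun t => -1 / S t) a - (-1 / S a) * deriv (fun t => -t / S t) a
      = -1 / (S a) ^ 2 ∧
    deriv (fun t => -t / S t) a / (-1 / (S a) ^ 2) = -Real.log (zp (wp a)) ∧
    -(deriv (fun t => -1 / S t) a) / (-1 / (S a) ^ 2) = -Real.log (wp a) :=
  stmt18_general d zp wp hzp hwpdiff hzpdiff hwp1 hcrit S hS hSneg a ha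
end
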